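/- For every discount factor λ ∈ (0,1) and every memory bound k ∈ ℕ (k ≥ 1), set ε = λ^{k+1}. Then in the game G₃(ε) with discount factor λ: every leader strategy profile with memory bound k gives the leader expected reward 0, while there exists a leader strategy profile (with a larger memory bound) whose leader expected reward is strictly positive. Hence for no memory bound k is an optimal leader strategy profile with memory bound k an optimal leader strategy profile among all leader strategy profiles. -/

import Mathlib

open scoped BigOperators

/-- A multi-player discounted sum game (MDSG) on sets of players `P`,
vertices `V` and actions `A`, all required to be finite (`A` nonempty).
The `owner` of a vertex chooses the action there; `tr` is the transition
function, `rew p v a` is the reward of player `p` for taking action `a`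
at vertex `v`, `init` is the initial probability distribution on the
vertices, and `disc` is the discount factor. -/
structure MDSG (P V A : Type) : Type where
  fin_P : Finite P
  fin_V : Finite V
  fin_A : Finite A
  nonempty_A : Nonempty A
  owner : V → P
  tr : V → A → V
  rew : P → V → A → ℝ
  init : V → ℝ
  init_nonneg : ∀ v, 0 ≤ init v
  init_sum : ∑' v, init v = 1
  disc : ℝ
  disc_pos : 0 < disc
  disc_lt_one : disc < 1

/-- A pure strategy profile: given the history (the list of vertex/action pairs
seen so far) and the current vertex, the owner of the current vertex chooses
an action.  The strategy of an individual player `p` is the restriction of the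
profile to the vertices owned by `p`. -/
abbrev Profile (V A : Type) : Type := List (V × A) → V → A

namespace MDSG

variable {P V A : Type}

/-- The pair (history, current vertex) after `n` steps of the play of `σ` from `v`. -/
def histState (G : MDSG P V A) (σ : Profile V A) (v : V) : ℕ → List (V × A) × V
  | 0 => ([], v)
  | n + 1 =>
    let s := G.histState σ v n
    (s.1 ++ [(s.2, σ s.1 s.2)], G.tr s.2 (σ s.1 s.2))

/-- The vertex visited at step `n` of the play of `σ` from `v`. -/
def playV (G : MDSG P V A) (σ : Profile V A) (v : V) (n : ℕ) : V :=
  (G.histState σ v n).2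

/-- The action taken at step `n` of the play of `σ` from `v`. -/
def playA (G : MDSG P V A) (σ : Profile V A) (v : V) (n : ℕ) : A :=
  σ (G.histState σ v n).1 (G.playV σ v n)

/-- The discounted reward of player `p` on the play of `σ` from `v`. -/
noncomputable def reward (G : MDSG P V A) (p : P) (σ : Profile V A) (v : V) : ℝ :=
  ∑' i : ℕ, G.rew p (G.playV σ v i) (G.playA σ v i) * G.disc ^ i

/-- The expected reward of player `p` under the strategy profile `σ`. -/
noncomputable def ER (G : MDSG P V A) (p : P) (σ : Profile V A) : ℝ :=
  ∑' v : V, G.init v * G.reward p σ v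

/-- `σ'` differs from `σ` at most in the strategy of player `p`. -/
def DiffOnly (G : MDSG P V A) (σ σ' : Profile V A) (p : P) : Prop :=
  ∀ h v, G.owner v ≠ p → σ' h v = σ h v

/-- Nash equilibrium: no player can profit from a unilateral deviation. -/
def IsNash (G : MDSG P V A) (σ : Profile V A) : Prop :=
  ∀ p σ', G.DiffOnly σ σ' p → G.ER p σ' ≤ G.ER p σ

/-- Leader strategy profile: no player other than the leader `l` can profit
from a unilateral deviation. -/
def IsLeaderSP (G : MDSG P V A) (l : P) (σ : Profile V A) : Prop :=
  ∀ p, p ≠ l → ∀ σ', G.DiffOnly σ σ' p → G.ER p σ' ≤ G.ER p σ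

/-- `σ` is a (pure) strategy profile with memory bound `b`: there is a memory
set `M` with `|M| ≤ b`, an initial memory state, a memory update function and
a usage function producing all the actions of `σ`. -/
def MemBound (G : MDSG P V A) (σ : Profile V A) (b : ℕ) : Prop :=
  ∃ n : ℕ, n ≤ b ∧ ∃ (m₀ : Fin n) (μ : Fin n → V × A → Fin n) (u : Fin n → V → A),
    ∀ h v, σ h v = u (h.foldl μ m₀) v

/-- `σ` is memoryless (positional): actions depend only on the current vertex. -/
def Positional (G : MDSG P V A) (σ : Profile V A) : Prop :=
  ∀ h h' v, σ h v = σ h' v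

open Classical in
/-- Combination of a strategy for player `p` with a joint strategy of the other players. -/
noncomputable def combine (G : MDSG P V A) (p : P) (τp τo : Profile V A) : Profile V A :=
  fun h v => if G.owner v = p then τp h v else τo h v

/-- The lower value of player `p` at vertex `v`: the supremum over the pure
strategies of `p` of the infimum over the joint pure strategies of the other
players of the reward of `p` on the resulting play from `v`. -/
noncomputable def lowerValue (G : MDSG P V A) (p : P) (v : V) : ℝ :=
  ⨆ τp : Profile V A, ⨅ τo : Profile V A, G.reward p (G.combine p τp τo) v

/-- The upper value of player `p` at vertex `v`. -/
noncomputable def upperValue (G : MDSG P V A) (p : P) (v : V) : ℝ :=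
  ⨅ τo : Profile V A, ⨆ τp : Profile V A, G.reward p (G.combine p τp τo) v

/-- The history `h` contains a deviation from `σ` at position `i`. -/
def DeviatesAt (G : MDSG P V A) (σ : Profile V A) (h : List (V × A)) (i : ℕ) : Prop :=
  ∃ hi : i < h.length, (h.get ⟨i, hi⟩).2 ≠ σ (h.take i) (h.get ⟨i, hi⟩).1

/-- Reward-and-punish profile: on every history that deviates from the
prescribed actions, every action depends only on the current vertex and on the
identity of the first player who deviated (all players follow a fixed
positional strategy depending only on the first deviator). -/
def IsRewardPunish (G : MDSG P V A) (σ : Profile V A) : Prop :=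
  ∃ punish : P → V → A, ∀ (h : List (V × A)) (i : ℕ) (hi : i < h.length),
    G.DeviatesAt σ h i → (∀ j, j < i → ¬ G.DeviatesAt σ h j) →
    ∀ v, σ h v = punish (G.owner (h.get ⟨i, hi⟩).1) v

/-- The outcome plays of `σ` are generated with compliance memory bound `b`:
on every history on which all players have complied, the actions of `σ` are
produced by a memory structure with at most `b` states. -/
def ComplianceMemBound (G : MDSG P V A) (σ : Profile V A) (b : ℕ) : Prop :=
  ∃ n : ℕ, n ≤ b ∧ ∃ (m₀ : Fin n) (μ : Fin n → V × A → Fin n) (u : Fin n → V → A),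
    ∀ h : List (V × A), (∀ i, ¬ G.DeviatesAt σ h i) →
      ∀ v, σ h v = u (h.foldl μ m₀) v

/-- The set of stationary mixed decision vectors: an assignment of a
probability distribution over the actions to every vertex. -/
def simplexD (V A : Type) : Set (V → A → ℝ) :=
  {d | ∀ v, (∀ a, 0 ≤ d v a) ∧ ∑' a, d v a = 1}

end MDSG
namespace MDSG

/-- The game `G₃(ε)` (Figure 4 of the paper) with discount factor `lam`:
two players `0` (player 1) and `1` (the leader); four vertices `0, 1, 2, 3`
(representing vertices 1, 2, 3, 4), where vertices `0, 2, 3` belong to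
player 1 and vertex `1` belongs to the leader; actions `Bool`
(`true` = "go", `false` = "stay").  Vertex `0`: "go" moves to `1` and "stay"
moves to `3`, both with rewards `(0,0)`.  Vertex `1`: "stay" loops with
rewards `(1,0)`, "go" moves to `2` with rewards `(0,0)`.  Vertex `2` loops
with rewards `(0,50)`; vertex `3` loops with rewards `(1-ε,0)`.  The initial
distribution is the point mass at vertex `0`. -/
noncomputable def G3 (lam eps : ℝ) (h0 : 0 < lam) (h1 : lam < 1) :
    MDSG (Fin 2) (Fin 4) Bool where
  fin_P := inferInstance
  fin_V := inferInstance
  fin_A := inferInstance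
  nonempty_A := inferInstance
  owner := fun v => if v = 1 then 1 else 0
  tr := fun v a =>
    if v = 0 then (if a then 1 else 3)
    else if v = 1 then (if a then 2 else 1)
    else v
  rew := fun p v _a =>
    if v = 1 then (if _a then 0 else (if p = 0 then 1 else 0))
    else if v = 2 then (if p = 1 then 50 else 0)
    else if v = 3 then (if p = 0 then 1 - eps else 0)
    else 0
  init := fun v => if v = 0 then 1 else 0
  init_nonneg := by intro v; split <;> norm_num
  init_sum := by simpa using tsum_ite_eq (0 : Fin 4) (1 : ℝ)
  disc := lam
  disc_pos := h0
  disc_lt_one := h1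

end MDSG

/-! A leader with at most `k` memory states who waits at her vertex runs her memory through the
orbit of a self-map of a `k`-element set, so if she ever moves on to the vertex paying her `50`,
she does so after `m < k` rounds. Player 1 then earns `λ + ⋯ + λ^m`, less than the
`(1 - λ^(k+1)) λ / (1 - λ) = λ + ⋯ + λ^(k+1)` he secures by taking the other sink at once; so in
a leader strategy profile with memory bound `k` she never moves and earns `0`. Waiting exactly
`k + 1` rounds leaves player 1 indifferent, giving a leader strategy profile that pays her
`50 λ^(k+3) / (1 - λ) > 0`. -/

theorem Function.lt_card_of_first_hit {α : Type*} [Fintype α] (f : α → α) (x : α)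
    {p : α → Prop} {j : ℕ} (hj : p (f^[j] x)) (hmin : ∀ i < j, ¬ p (f^[i] x)) :
    j < Fintype.card α := by
  by_contra! hcard
  obtain ⟨a, b, hab, hfab⟩ := Fintype.exists_ne_map_eq_of_card_lt
    (fun i : Fin (Fintype.card α + 1) => f^[i] x) (by simp)
  wlog hlt : a < b generalizing a b
  · exact this b a hab.symm hfab.symm (lt_of_le_of_ne (not_lt.mp hlt) hab.symm)
  have hb : (b : ℕ) ≤ j := by omega
  -- the orbit is periodic from `a` on, so `p` already holds `b - a` steps before `j`
  have hper : f^[j - (b - a)] x = f^[j] x := by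
    calc f^[j - (b - a)] x = f^[j - b] (f^[a] x) := by
          rw [← Function.iterate_add_apply]; congr 1; omega
      _ = f^[j - b] (f^[b] x) := by rw [hfab]
      _ = f^[j] x := by rw [← Function.iterate_add_apply]; congr 1; omega
  exact hmin (j - (b - a)) (by omega) (hper ▸ hj)

theorem hasSum_ite_le_mul_pow (c : ℝ) {r : ℝ} (hr₀ : 0 ≤ r) (hr₁ : r < 1) (N : ℕ) :
    HasSum (fun i : ℕ => (if N ≤ i then c else 0) * r ^ i) (c * r ^ N / (1 - r)) := by
  rw [← hasSum_nat_add_iff' N]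
  have hhead : ∑ i ∈ Finset.range N, (if N ≤ i then c else 0) * r ^ i = 0 :=
    Finset.sum_eq_zero fun i hi => by simp [(Finset.mem_range.mp hi).not_ge]
  have htail : (fun i : ℕ => (if N ≤ i + N then c else 0) * r ^ (i + N))
      = fun i => c * r ^ N * r ^ i := by
    funext i; rw [if_pos (Nat.le_add_left N i), pow_add]; ring
  rw [hhead, sub_zero, htail, div_eq_mul_inv]
  exact (hasSum_geometric_of_lt_one hr₀ hr₁).mul_left (c * r ^ N)

namespace MDSG

variable {P V A : Type} (G : MDSG P V A) (σ : Profile V A) (v : V)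

theorem playV_zero : G.playV σ v 0 = v := rfl

theorem playV_succ (n : ℕ) : G.playV σ v (n + 1) = G.tr (G.playV σ v n) (G.playA σ v n) := rfl

theorem playA_eq (n : ℕ) : G.playA σ v n = σ (G.histState σ v n).1 (G.playV σ v n) := rfl

theorem histState_fst_length (n : ℕ) : (G.histState σ v n).1.length = n := by
  induction n with
  | zero => rfl
  | succ n ih => simp [histState, ih]

theorem histState_succ_fst (n : ℕ) :
    (G.histState σ v (n + 1)).1 = (G.histState σ v n).1 ++ [(G.playV σ v n, G.playA σ v n)] :=
  rfl

theorem reward_eq_of_hasSum {p : P} {f : ℕ → ℝ} {a : ℝ}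
    (hf : ∀ i, G.rew p (G.playV σ v i) (G.playA σ v i) = f i)
    (ha : HasSum (fun i => f i * G.disc ^ i) a) : G.reward p σ v = a := by
  simp only [reward, hf, ha.tsum_eq]

theorem ER_eq_reward_of_init_eq [DecidableEq V] {v₀ : V}
    (hinit : ∀ v, G.init v = if v = v₀ then 1 else 0) (p : P) : G.ER p σ = G.reward p σ v₀ := by
  simp only [ER, hinit, ite_mul, one_mul, zero_mul, tsum_ite_eq]

theorem foldl_histState_add_of_playV_eq {M : Type} {m₀ : M} {μ : M → V × A → M}
    {u : M → V → A} (hσ : ∀ h v, σ h v = u (h.foldl μ m₀) v) {w : V} (t j : ℕ)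
    (hw : ∀ i < j, G.playV σ v (t + i) = w) :
    (G.histState σ v (t + j)).1.foldl μ m₀
      = (fun m => μ m (w, u m w))^[j] ((G.histState σ v t).1.foldl μ m₀) := by
  induction j with
  | zero => rfl
  | succ j ih =>
    have hj := ih fun i hi => hw i (by omega)
    rw [← add_assoc, histState_succ_fst, List.foldl_append, hj, playA_eq, hσ, hj,
      hw j (Nat.lt_succ_self j), Function.iterate_succ_apply']
    rfl

end MDSG

namespace MDSG.G3

variable {lam eps : ℝ} {h0 : 0 < lam} {h1 : lam < 1} {σ : Profile (Fin 4) Bool}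

local notation "𝒢" => G3 lam eps h0 h1

theorem ER_eq (p : Fin 2) : (𝒢).ER p σ = (𝒢).reward p σ 0 :=
  ER_eq_reward_of_init_eq _ σ (fun _ => rfl) p

theorem rew_zero (v : Fin 4) (a : Bool) :
    (𝒢).rew 0 v a = if v = 1 then (if a then 0 else 1) else if v = 3 then 1 - eps else 0 := by
  fin_cases v <;> simp [G3]

theorem rew_one (v : Fin 4) (a : Bool) : (𝒢).rew 1 v a = if v = 2 then 50 else 0 := by
  fin_cases v <;> cases a <;> simp [G3]

theorem playV_succ_eq_three (ha : σ [] 0 = false) (t : ℕ) : (𝒢).playV σ 0 (t + 1) = 3 := by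
  induction t with
  | zero => rw [playV_succ, playA_eq, playV_zero]; exact congrArg ((𝒢).tr 0) ha
  | succ t ih => rw [playV_succ, ih]; rfl

theorem playV_succ_eq_one (ha : σ [] 0 = true) {t : ℕ}
    (hstay : ∀ j < t, (𝒢).playA σ 0 (j + 1) = false) : (𝒢).playV σ 0 (t + 1) = 1 := by
  induction t with
  | zero => rw [playV_succ, playA_eq, playV_zero]; exact congrArg ((𝒢).tr 0) ha
  | succ t ih =>
    rw [playV_succ, ih fun j hj => hstay j (by omega), hstay t (Nat.lt_succ_self t)]
    rfl

theorem reward_one_eq_zero (hV : ∀ t, (𝒢).playV σ 0 t ≠ 2) : (𝒢).reward 1 σ 0 = 0 :=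
  reward_eq_of_hasSum _ σ 0 (f := 0) (fun i => by rw [rew_one, if_neg (hV i)]; rfl)
    (by simpa only [Pi.zero_apply, zero_mul] using hasSum_zero)

theorem reward_zero_of_false (ha : σ [] 0 = false) :
    (𝒢).reward 0 σ 0 = (1 - eps) * lam / (1 - lam) := by
  refine reward_eq_of_hasSum _ σ 0 (fun i => ?_) (pow_one lam ▸ hasSum_ite_le_mul_pow _ h0.le h1 1)
  rcases i with _ | i
  · rfl
  · rw [rew_zero, playV_succ_eq_three ha]; simp

/-- Player 1 moves to the leader's vertex, where the leader stays for exactly `m` rounds before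
moving on. -/
def LeavesAfter (G : MDSG (Fin 2) (Fin 4) Bool) (σ : Profile (Fin 4) Bool) (m : ℕ) : Prop :=
  σ [] 0 = true ∧ (∀ j < m, G.playA σ 0 (j + 1) = false) ∧ G.playA σ 0 (m + 1) = true

namespace LeavesAfter

variable {m : ℕ}

theorem playV_succ_eq_one (h : LeavesAfter 𝒢 σ m) {j : ℕ} (hj : j ≤ m) :
    (𝒢).playV σ 0 (j + 1) = 1 :=
  G3.playV_succ_eq_one h.1 fun i hi => h.2.1 i (by omega)

theorem playV_add_eq_two (h : LeavesAfter 𝒢 σ m) (t : ℕ) : (𝒢).playV σ 0 (m + 2 + t) = 2 := by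
  induction t with
  | zero => rw [playV_succ, h.playV_succ_eq_one le_rfl, h.2.2]; rfl
  | succ t ih => rw [← add_assoc, playV_succ, ih]; rfl

theorem reward_zero (h : LeavesAfter 𝒢 σ m) :
    (𝒢).reward 0 σ 0 = (lam - lam ^ (m + 1)) / (1 - lam) := by
  refine reward_eq_of_hasSum _ σ 0
    (f := fun i => (if 1 ≤ i then 1 else 0) - (if m + 1 ≤ i then 1 else 0)) (fun i => ?_) ?_
  · rw [rew_zero]
    rcases i with _ | j
    · simp [playV_zero]
    obtain hj | rfl | hj := lt_trichotomy j m
    · rw [h.playV_succ_eq_one hj.le, h.2.1 j hj]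
      simp [Nat.not_le.mpr hj]
    · rw [h.playV_succ_eq_one le_rfl, h.2.2]; simp
    · obtain ⟨t, rfl⟩ := Nat.exists_eq_add_of_lt hj
      rw [show m + t + 1 + 1 = m + 2 + t by omega, h.playV_add_eq_two]
      simp [show 1 ≤ m + 2 + t by omega, show m + 1 ≤ m + 2 + t by omega]
  · have hsum := (hasSum_ite_le_mul_pow 1 h0.le h1 1).sub
      (hasSum_ite_le_mul_pow 1 h0.le h1 (m + 1))
    simp only [← sub_mul, one_mul, pow_one, ← sub_div] at hsum
    exact hsum

theorem reward_one (h : LeavesAfter 𝒢 σ m) :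
    (𝒢).reward 1 σ 0 = 50 * lam ^ (m + 2) / (1 - lam) := by
  refine reward_eq_of_hasSum _ σ 0 (fun i => ?_) (hasSum_ite_le_mul_pow 50 h0.le h1 (m + 2))
  rw [rew_one]
  rcases lt_or_ge i (m + 2) with hi | hi
  · rcases i with _ | j
    · rfl
    · rw [h.playV_succ_eq_one (by omega)]; simp; omega
  · obtain ⟨t, rfl⟩ := Nat.exists_eq_add_of_le hi
    rw [h.playV_add_eq_two]; simp

/-- While the leader waits, her memory runs through the orbit of a self-map of the memory set, and
she must leave before that orbit repeats. -/
theorem lt_of_memBound {k : ℕ} (h : LeavesAfter 𝒢 σ m) (hmem : (𝒢).MemBound σ k) : m < k := by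
  obtain ⟨n, hnk, m₀, μ, u, hσ⟩ := hmem
  have hact : ∀ j ≤ m, (𝒢).playA σ 0 (j + 1)
      = u ((fun s => μ s (1, u s 1))^[j] (((𝒢).histState σ 0 1).1.foldl μ m₀)) 1 := by
    intro j hj
    have hmemj := foldl_histState_add_of_playV_eq _ σ 0 hσ 1 j fun i hi => by
      rw [add_comm]; exact h.playV_succ_eq_one (by omega)
    rw [playA_eq, hσ, h.playV_succ_eq_one hj, add_comm, hmemj]
  have hfirst := Function.lt_card_of_first_hit _ _ (p := fun s => u s 1 = true)
    (hact m le_rfl ▸ h.2.2) fun i hi => by simp [← hact i hi.le, h.2.1 i hi]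
  exact (Fintype.card_fin n ▸ hfirst).trans_le hnk

end LeavesAfter

theorem exists_leavesAfter_of_reward_one_ne_zero (h : (𝒢).reward 1 σ 0 ≠ 0) :
    ∃ m, LeavesAfter 𝒢 σ m := by
  cases ha : σ [] 0
  · refine absurd (reward_one_eq_zero fun t => ?_) h
    rcases t with _ | t
    · exact (by decide : (0 : Fin 4) ≠ 2)
    · rw [playV_succ_eq_three ha]; decide
  by_cases hgo : ∃ j, (𝒢).playA σ 0 (j + 1) = true
  · exact ⟨Nat.find hgo, ha, fun j hj => by simpa using Nat.find_min hgo hj, Nat.find_spec hgo⟩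
  simp only [not_exists, Bool.not_eq_true] at hgo
  refine absurd (reward_one_eq_zero fun t => ?_) h
  rcases t with _ | t
  · exact (by decide : (0 : Fin 4) ≠ 2)
  · rw [playV_succ_eq_one ha fun j _ => hgo j]; decide

theorem leavesAfter_of_forall_eq_decide {m : ℕ} (ha : σ [] 0 = true)
    (hwait : ∀ h, σ h 1 = decide (m + 1 ≤ h.length)) : LeavesAfter 𝒢 σ m := by
  have hact : ∀ j, (∀ i < j, (𝒢).playA σ 0 (i + 1) = false) →
      (𝒢).playA σ 0 (j + 1) = decide (m + 1 ≤ j + 1) := fun j hj => by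
    rw [playA_eq, playV_succ_eq_one ha hj, hwait, histState_fst_length]
  have hstay : ∀ j < m, (𝒢).playA σ 0 (j + 1) = false := by
    intro j
    induction j using Nat.strong_induction_on with
    | _ j ih => intro hj; rw [hact j fun i hi => ih i hi (by omega)]; simp; omega
  exact ⟨ha, hstay, by rw [hact m hstay]; simp⟩

theorem ER_one_eq_zero_of_memBound {k : ℕ} (heps : eps ≤ lam ^ k) (hmem : (𝒢).MemBound σ k)
    (hσ : (𝒢).IsLeaderSP 1 σ) : (𝒢).ER 1 σ = 0 := by
  rw [ER_eq]
  by_contra hne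
  obtain ⟨m, hm⟩ := exists_leavesAfter_of_reward_one_ne_zero hne
  -- player 1's deviation: take the `1 - ε` sink at once
  have hdev := hσ 0 (by decide) (fun h => Function.update (σ h) 0 false)
    fun h v hv => Function.update_of_ne (by rintro rfl; exact hv rfl) _ _
  rw [ER_eq, ER_eq, reward_zero_of_false (by simp), hm.reward_zero,
    div_le_div_iff_of_pos_right (sub_pos.mpr h1)] at hdev
  have hmk := hm.lt_of_memBound hmem
  refine lt_irrefl (lam ^ (m + 1)) ?_
  calc lam ^ (m + 1) ≤ eps * lam := by linarith
    _ ≤ lam ^ k * lam := by gcongr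
    _ = lam ^ (k + 1) := (pow_succ lam k).symm
    _ < lam ^ (m + 1) := pow_lt_pow_right_of_lt_one₀ h0 h1 (by omega)

def waitThenGo (d : ℕ) : Profile (Fin 4) Bool :=
  fun h v => if v = 1 then decide (d + 1 ≤ h.length) else true

theorem leavesAfter_waitThenGo (d : ℕ) : LeavesAfter 𝒢 (waitThenGo d) d :=
  leavesAfter_of_forall_eq_decide rfl fun _ => rfl

theorem isLeaderSP_waitThenGo {d : ℕ} (heps : lam ^ d ≤ eps) :
    (𝒢).IsLeaderSP 1 (waitThenGo d) := by
  intro p hp σ' hσ'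
  obtain rfl : p = 0 := by omega
  have hwait : ∀ h, σ' h 1 = decide (d + 1 ≤ h.length) := fun h => hσ' h 1 (by simp [G3])
  rw [ER_eq, ER_eq, (leavesAfter_waitThenGo d).reward_zero]
  cases ha : σ' [] 0
  · rw [reward_zero_of_false ha, div_le_div_iff_of_pos_right (sub_pos.mpr h1), pow_succ]
    nlinarith
  · rw [(leavesAfter_of_forall_eq_decide ha hwait).reward_zero]

theorem ER_one_waitThenGo_pos (d : ℕ) : 0 < (𝒢).ER 1 (waitThenGo d) := by
  rw [ER_eq, (leavesAfter_waitThenGo d).reward_one]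
  have := sub_pos.mpr h1
  positivity

end MDSG.G3

open MDSG in
theorem no_memory_bound_suffices_general (lam : ℝ) (h0 : 0 < lam) (h1 : lam < 1)
    (k : ℕ) :
    (∀ σ : Profile (Fin 4) Bool,
        (G3 lam (lam ^ (k + 1)) h0 h1).MemBound σ k →
        (G3 lam (lam ^ (k + 1)) h0 h1).IsLeaderSP 1 σ →
        (G3 lam (lam ^ (k + 1)) h0 h1).ER 1 σ = 0) ∧
    (∃ σ : Profile (Fin 4) Bool,
        (G3 lam (lam ^ (k + 1)) h0 h1).IsLeaderSP 1 σ ∧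
        0 < (G3 lam (lam ^ (k + 1)) h0 h1).ER 1 σ) :=
  ⟨fun _ hmem hσ => G3.ER_one_eq_zero_of_memBound
      (pow_le_pow_of_le_one h0.le h1.le k.le_succ) hmem hσ,
    G3.waitThenGo (k + 1), G3.isLeaderSP_waitThenGo le_rfl, G3.ER_one_waitThenGo_pos _⟩

open MDSG in
/-- For every discount factor `lam ∈ (0,1)` and every memory bound `k ≥ 1`,
taking `ε = lam ^ (k+1)`, in the game `G₃(ε)` with discount factor `lam`:
every leader strategy profile with memory bound `k` gives the leader (player
`1`) expected reward `0`, while there exists a leader strategy profile (using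
more memory) whose leader expected reward is strictly positive.  Hence no
memory bound suffices for optimal leader strategy profiles. -/
theorem no_memory_bound_suffices (lam : ℝ) (h0 : 0 < lam) (h1 : lam < 1)
    (k : ℕ) (hk : 1 ≤ k) :
    (∀ σ : Profile (Fin 4) Bool,
        (G3 lam (lam ^ (k + 1)) h0 h1).MemBound σ k →
        (G3 lam (lam ^ (k + 1)) h0 h1).IsLeaderSP 1 σ →
        (G3 lam (lam ^ (k + 1)) h0 h1).ER 1 σ = 0) ∧
    (∃ σ : Profile (Fin 4) Bool,
        (G3 lam (lam ^ (k + 1)) h0 h1).IsLeaderSP 1 σ ∧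
        0 < (G3 lam (lam ^ (k + 1)) h0 h1).ER 1 σ) :=
  no_memory_bound_suffices_general lam h0 h1 k
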